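/- arXiv:2112.01387 — 8 statements merged into one kernel-verified Lean document; each statement's English description precedes it below -/
import Mathlib

section
/- For the weighted-average objective λ(k) = (l·Σ_{i≤k} ψ_(i) + u·Σ_{i>k} ψ_(i)) / (l·k + u·(n-k)) over sorted values ψ_(1) ≤ ... ≤ ψ_(n) with 0 < l < u, the condition λ(k) ≥ λ(k+1) is equivalent to λ(k) ≤ ψ_(k+1). -/
open Finset

/-- The weighted-average objective λ(k) over sorted values ψ with weights l on
the first k entries and u on the rest. -/
noncomputable def lamObj (n : ℕ) (l u : ℝ) (ψ : Fin n → ℝ) (k : ℕ) : ℝ :=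
  (l * ∑ i ∈ Finset.univ.filter (fun i : Fin n => (i : ℕ) < k), ψ i +
      u * ∑ i ∈ Finset.univ.filter (fun i : Fin n => k ≤ (i : ℕ)), ψ i) /
    (l * k + u * ((n : ℝ) - k))

/-- λ(k) ≥ λ(k+1) if and only if λ(k) ≤ ψ_{k+1}. -/
theorem stmt_2 (n : ℕ) (ψ : Fin n → ℝ) (hψ : Monotone ψ)
    (l u : ℝ) (hl : 0 < l) (hlu : l < u)
    (k : ℕ) (hk : k < n) :
    lamObj n l u ψ (k + 1) ≤ lamObj n l u ψ k ↔
      lamObj n l u ψ k ≤ ψ ⟨k, hk⟩ := by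
  have hkn : (k : ℝ) < n := by exact_mod_cast hk
  have hk1n : (k : ℝ) + 1 ≤ n := by exact_mod_cast hk
  have hD : 0 < l * k + u * ((n : ℝ) - k) := by nlinarith
  have hD' : 0 < l * (k + 1 : ℕ) + u * ((n : ℝ) - (k + 1 : ℕ)) := by
    push_cast; nlinarith
  set A := ∑ i ∈ Finset.univ.filter (fun i : Fin n => (i : ℕ) < k), ψ i with hA
  set B := ∑ i ∈ Finset.univ.filter (fun i : Fin n => k ≤ (i : ℕ)), ψ i with hB
  have hnot1 : (⟨k, hk⟩ : Fin n) ∉ Finset.univ.filter (fun i : Fin n => (i : ℕ) < k) := by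
    simp
  have hnot2 : (⟨k, hk⟩ : Fin n) ∉ Finset.univ.filter (fun i : Fin n => k + 1 ≤ (i : ℕ)) := by
    simp
  have hset1 : Finset.univ.filter (fun i : Fin n => (i : ℕ) < k + 1) =
      insert (⟨k, hk⟩ : Fin n) (Finset.univ.filter (fun i : Fin n => (i : ℕ) < k)) := by
    ext i
    simp [Nat.lt_succ_iff_lt_or_eq, Fin.ext_iff, or_comm]; exact le_iff_eq_or_lt
  have hset2 : Finset.univ.filter (fun i : Fin n => k ≤ (i : ℕ)) =
      insert (⟨k, hk⟩ : Fin n) (Finset.univ.filter (fun i : Fin n => k + 1 ≤ (i : ℕ))) := by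
    ext i
    constructor
    · intro hi
      simp only [mem_filter, mem_univ, true_and] at hi
      rcases eq_or_lt_of_le hi with h | h
      · simp [Fin.ext_iff, h.symm]
      · simp only [mem_insert, mem_filter, mem_univ, true_and, Fin.ext_iff]; omega
    · intro hi
      simp only [mem_insert, mem_filter, mem_univ, true_and, Fin.ext_iff] at hi ⊢
      omega
  have hsum1 : ∑ i ∈ Finset.univ.filter (fun i : Fin n => (i : ℕ) < k + 1), ψ i
      = A + ψ ⟨k, hk⟩ := by
    rw [hset1, Finset.sum_insert hnot1]; ring
  have hsum2 : ∑ i ∈ Finset.univ.filter (fun i : Fin n => k + 1 ≤ (i : ℕ)), ψ i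
      = B - ψ ⟨k, hk⟩ := by
    have := hset2 ▸ hB
    rw [Finset.sum_insert hnot2] at this
    linarith
  unfold lamObj
  rw [← hA, ← hB, hsum1, hsum2, div_le_div_iff₀ hD' hD, div_le_iff₀ hD]
  push_cast at hD' ⊢
  constructor
  · intro h
    nlinarith [h, hD, hD', hlu]
  · intro h
    nlinarith [h, hD, hD', hlu]
end

section
/- For the sequence λ(k) as above with sorted ψ values and 0 < l < u, if λ(k) ≥ λ(k+1) (equivalently λ(k) ≤ ψ_(k+1)), then λ(k+1) ≤ ψ_(k+2), and hence λ(k+1) ≥ λ(k+2); i.e., the sequence λ is unimodal (nonincreasing once it starts decreasing). -/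
open Finset

lemma filter_lt_succ_eq (n m : ℕ) (hm : m < n) :
    Finset.univ.filter (fun i : Fin n => (i : ℕ) < m + 1)
      = insert ⟨m, hm⟩ (Finset.univ.filter (fun i : Fin n => (i : ℕ) < m)) := by
  ext i; simp [Fin.ext_iff]; omega

lemma filter_ge_eq (n m : ℕ) (hm : m < n) :
    Finset.univ.filter (fun i : Fin n => m ≤ (i : ℕ))
      = insert ⟨m, hm⟩ (Finset.univ.filter (fun i : Fin n => m + 1 ≤ (i : ℕ))) := by
  ext i; simp [Fin.ext_iff]; omega

lemma lamObj_step (n : ℕ) (ψ : Fin n → ℝ) (l u : ℝ) (hl : 0 < l) (hlu : l < u)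
    (m : ℕ) (hm : m < n)
    (h : lamObj n l u ψ m ≤ ψ ⟨m, hm⟩) :
    lamObj n l u ψ (m + 1) ≤ lamObj n l u ψ m := by
  have h1 : (1 : ℝ) ≤ (n : ℝ) - m := by
    have : (m : ℝ) + 1 ≤ n := by exact_mod_cast hm
    linarith
  have hm0 : (0 : ℝ) ≤ (m : ℝ) := Nat.cast_nonneg m
  have hDm : (0 : ℝ) < l * m + u * ((n : ℝ) - m) := by nlinarith
  have hDm1 : (0 : ℝ) < l * (m + 1 : ℕ) + u * ((n : ℝ) - (m + 1 : ℕ)) := by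
    push_cast; nlinarith
  have hnot1 : (⟨m, hm⟩ : Fin n) ∉
      Finset.univ.filter (fun i : Fin n => (i : ℕ) < m) := by simp
  have hnot2 : (⟨m, hm⟩ : Fin n) ∉
      Finset.univ.filter (fun i : Fin n => m + 1 ≤ (i : ℕ)) := by simp
  unfold lamObj at h ⊢
  rw [div_le_iff₀ hDm] at h
  rw [div_le_div_iff₀ hDm1 hDm]
  rw [filter_lt_succ_eq n m hm, Finset.sum_insert hnot1] at *
  rw [filter_ge_eq n m hm, Finset.sum_insert hnot2] at *
  push_cast at *
  nlinarith [h, hlu, hDm]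

/-- If λ(k) ≤ ψ_{k+1}, then λ(k+1) ≤ ψ_{k+2}, and hence λ(k+1) ≥ λ(k+2):
the sequence λ is unimodal. -/
theorem stmt_3 (n : ℕ) (ψ : Fin n → ℝ) (hψ : Monotone ψ)
    (l u : ℝ) (hl : 0 < l) (hlu : l < u)
    (k : ℕ) (hk2 : k + 2 ≤ n)
    (h : lamObj n l u ψ k ≤ ψ ⟨k, by omega⟩) :
    lamObj n l u ψ (k + 1) ≤ ψ ⟨k + 1, by omega⟩ ∧
      lamObj n l u ψ (k + 2) ≤ lamObj n l u ψ (k + 1) := by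
  have hk : k < n := by omega
  have hk1 : k + 1 < n := by omega
  have step1 := lamObj_step n ψ l u hl hlu k hk h
  have hmono : ψ ⟨k, hk⟩ ≤ ψ ⟨k + 1, hk1⟩ := hψ (by simp [Fin.le_def])
  have first : lamObj n l u ψ (k + 1) ≤ ψ ⟨k + 1, hk1⟩ := by
    calc lamObj n l u ψ (k + 1) ≤ lamObj n l u ψ k := step1
    _ ≤ ψ ⟨k, hk⟩ := h
    _ ≤ ψ ⟨k + 1, hk1⟩ := hmono
  have step2 := lamObj_step n ψ l u hl hlu (k + 1) hk1 first
  exact ⟨first, by simpa using step2⟩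
end

section
/- The maximum of the linear-fractional objective (Σ R_i ψ_i)/(Σ R_i) over the box constraint l ≤ R_i ≤ u (with 0 < l ≤ u) is attained at a vector R whose coordinates take only the values l or u; specifically, there exists k such that R assigns l to the k smallest ψ values and u to the rest. -/
open Finset

/-- The linear-fractional objective over box-constrained weights is maximized at
a threshold vector taking only the values l and u: l on the k smallest values of
ψ (sorted nondecreasingly) and u on the rest. -/
theorem stmt_4 (n : ℕ) (hn : 0 < n) (ψ : Fin n → ℝ) (hψ : Monotone ψ)
    (l u : ℝ) (hl : 0 < l) (hlu : l ≤ u) :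
    ∃ k ≤ n, ∃ Rstar : Fin n → ℝ,
      (∀ i, Rstar i = if (i : ℕ) < k then l else u) ∧
      (∀ R : Fin n → ℝ, (∀ i, l ≤ R i ∧ R i ≤ u) →
        (∑ i, R i * ψ i) / (∑ i, R i) ≤
          (∑ i, Rstar i * ψ i) / (∑ i, Rstar i)) := by
  have hne : (Finset.univ : Finset (Fin n)).Nonempty := by
    simpa [Finset.univ_nonempty_iff] using Fin.pos_iff_nonempty.mp hn
  -- positivity of denominators
  have hpos : ∀ R : Fin n → ℝ, (∀ i, l ≤ R i) → 0 < ∑ i, R i := by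
    intro R hR
    exact Finset.sum_pos (fun i _ => lt_of_lt_of_le hl (hR i)) hne
  set F : ℕ → ℝ := fun m =>
    (∑ i : Fin n, (if (i : ℕ) < m then l else u) * ψ i) /
      (∑ i : Fin n, (if (i : ℕ) < m then l else u)) with hF
  obtain ⟨k0, hk0mem, hk0max⟩ :=
    Finset.exists_max_image (Finset.range (n + 1)) F ⟨0, Finset.mem_range.mpr (Nat.succ_pos n)⟩
  set c : ℝ := F k0 with hc
  set Tstar : Fin n → ℝ := fun i => if (i : ℕ) < k0 then l else u with hTstar
  have hTstarl : ∀ i, l ≤ Tstar i := by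
    intro i; rw [hTstar]; dsimp only; split
    · exact le_refl l
    · exact hlu
  have hDpos : 0 < ∑ i, Tstar i := hpos Tstar hTstarl
  have hcD : c * ∑ i, Tstar i = ∑ i, Tstar i * ψ i := by
    have hceq : c = (∑ i, Tstar i * ψ i) / (∑ i, Tstar i) := rfl
    rw [hceq, div_mul_cancel₀ _ (ne_of_gt hDpos)]
  refine ⟨k0, Nat.lt_succ_iff.mp (Finset.mem_range.mp hk0mem), Tstar,
    fun i => by rw [hTstar], ?_⟩
  intro R hR
  -- the candidate threshold
  set S : Finset (Fin n) := Finset.univ.filter (fun i => ψ i < c) with hS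
  set k : ℕ := S.card with hk
  have hkn : k ≤ n := by
    calc k ≤ (Finset.univ : Finset (Fin n)).card :=
          Finset.card_le_card (Finset.filter_subset _ _)
    _ = n := by simp
  have hmem : ∀ i : Fin n, ψ i < c ↔ (i : ℕ) < k := by
    intro i
    constructor
    · intro hi
      have hsub : Finset.Iic i ⊆ S := by
        intro j hj
        rw [hS, Finset.mem_filter]
        exact ⟨Finset.mem_univ _, lt_of_le_of_lt (hψ (Finset.mem_Iic.mp hj)) hi⟩
      have := Finset.card_le_card hsub
      rw [Fin.card_Iic] at this
      omega
    · intro hi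
      by_contra hcon
      push_neg at hcon
      have hsub : S ⊆ Finset.Iio i := by
        intro j hj
        rw [hS, Finset.mem_filter] at hj
        rw [Finset.mem_Iio]
        by_contra hji
        push_neg at hji
        exact absurd (lt_of_le_of_lt (le_trans hcon (hψ hji)) hj.2) (lt_irrefl _)
      have := Finset.card_le_card hsub
      rw [Fin.card_Iio] at this
      omega
  set T : Fin n → ℝ := fun i => if (i : ℕ) < k then l else u with hT
  have hTl : ∀ i, l ≤ T i := by
    intro i; rw [hT]; dsimp only; split
    · exact le_refl l
    · exact hlu
  have hTpos := hpos T hTl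
  have hFk : F k ≤ c := hk0max k (Finset.mem_range.mpr (Nat.lt_succ_of_le hkn))
  have hTsum : ∑ i, T i * ψ i ≤ c * ∑ i, T i := by
    have := (div_le_iff₀ hTpos).mp hFk
    simpa [hF, hT] using this
  have hRpos := hpos R (fun i => (hR i).1)
  -- termwise comparison
  have hterm : ∀ i : Fin n, R i * (ψ i - c) ≤ T i * (ψ i - c) := by
    intro i
    rcases lt_or_ge (ψ i) c with h | h
    · have hTi : T i = l := by rw [hT]; simp [(hmem i).mp h]
      rw [hTi]
      exact mul_le_mul_of_nonpos_right (hR i).1 (by linarith)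
    · have hTi : T i = u := by
        rw [hT]; dsimp only
        have hni : ¬ (i : ℕ) < k := fun hh => absurd ((hmem i).mpr hh) (not_lt.mpr h)
        simp [hni]
      rw [hTi]
      exact mul_le_mul_of_nonneg_right (hR i).2 (by linarith)
  have hsum : ∑ i, R i * (ψ i - c) ≤ ∑ i, T i * (ψ i - c) :=
    Finset.sum_le_sum (fun i _ => hterm i)
  have hexp : ∀ V : Fin n → ℝ,
      ∑ i, V i * (ψ i - c) = (∑ i, V i * ψ i) - c * ∑ i, V i := by
    intro V
    rw [Finset.mul_sum, ← Finset.sum_sub_distrib]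
    exact Finset.sum_congr rfl (fun i _ => by ring)
  have hTzero : ∑ i, T i * (ψ i - c) ≤ 0 := by
    rw [hexp T]; linarith
  have hRle : ∑ i, R i * ψ i ≤ c * ∑ i, R i := by
    have h1 := hsum
    rw [hexp R, hexp T] at h1
    linarith
  rw [div_le_div_iff₀ hRpos hDpos]
  nlinarith [mul_le_mul_of_nonneg_right hRle hDpos.le, hcD, hRpos]
end

section
/- For sorted values ψ_(1) ≤ ... ≤ ψ_(n) and 0 < l ≤ u, the value max over R ∈ [l,u]^n of (Σ R_i ψ_i)/(Σ R_i) equals max over k ∈ {0,…,n} of (l·Σ_{i≤k} ψ_(i) + u·Σ_{i>k} ψ_(i))/(lk + u(n-k)). -/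
open Finset

lemma card_flt (n k : ℕ) (hk : k ≤ n) :
    (univ.filter (fun i : Fin n => (i:ℕ) < k)).card = k := by
  have h : (univ.filter (fun i : Fin n => (i:ℕ) < k)) =
      (Finset.range k).attachFin (fun m hm => lt_of_lt_of_le (mem_range.mp hm) hk) := by
    ext i
    simp [Finset.mem_attachFin, Finset.mem_range]
  rw [h, Finset.card_attachFin, Finset.card_range]

lemma card_fge (n k : ℕ) (hk : k ≤ n) :
    (univ.filter (fun i : Fin n => k ≤ (i:ℕ))).card = n - k := by
  have h := Finset.card_filter_add_card_filter_not (s := (univ : Finset (Fin n)))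
    (p := fun i : Fin n => (i:ℕ) < k)
  simp only [not_lt, Finset.card_univ, Fintype.card_fin] at h
  rw [card_flt n k hk] at h
  omega

/-- The supremum of the linear-fractional objective over the box [l,u]^n equals
the maximum over k of the threshold values λ(k). -/
theorem stmt_5 (n : ℕ) (hn : 0 < n) (ψ : Fin n → ℝ) (hψ : Monotone ψ)
    (l u : ℝ) (hl : 0 < l) (hlu : l ≤ u) :
    (⨆ R : {R : Fin n → ℝ // ∀ i, l ≤ R i ∧ R i ≤ u},
        (∑ i, R.1 i * ψ i) / (∑ i, R.1 i)) =
      (Finset.range (n + 1)).sup' (Finset.nonempty_range_iff.mpr (by omega))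
        (fun k =>
          (l * ∑ i ∈ Finset.univ.filter (fun i : Fin n => (i : ℕ) < k), ψ i +
              u * ∑ i ∈ Finset.univ.filter (fun i : Fin n => k ≤ (i : ℕ)), ψ i) /
            (l * k + u * ((n : ℝ) - k))) := by
  have hu : (0:ℝ) < u := hl.trans_le hlu
  have hune : (Finset.univ : Finset (Fin n)).Nonempty := by
    simpa [Finset.univ_nonempty_iff] using Fin.pos_iff_nonempty.mp hn
  have hden : ∀ k : ℕ, k ≤ n → (0:ℝ) < l * k + u * ((n : ℝ) - k) := by
    intro k hk
    have hkn : (k : ℝ) ≤ n := by exact_mod_cast hk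
    have hk0 : (0:ℝ) ≤ k := Nat.cast_nonneg k
    have hn' : (0:ℝ) < n := by exact_mod_cast hn
    nlinarith [mul_le_mul_of_nonneg_right hlu (sub_nonneg.mpr hkn)]
  haveI : Nonempty {R : Fin n → ℝ // ∀ i, l ≤ R i ∧ R i ≤ u} :=
    ⟨⟨fun _ => l, fun _ => ⟨le_refl l, hlu⟩⟩⟩
  -- positivity of denominators Σ R i
  have hRpos : ∀ R : {R : Fin n → ℝ // ∀ i, l ≤ R i ∧ R i ≤ u}, (0:ℝ) < ∑ i, R.1 i := by
    intro R
    exact Finset.sum_pos (fun i _ => lt_of_lt_of_le hl (R.2 i).1) hune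
  -- boundedness of the range
  set C : ℝ := ψ ⟨n - 1, Nat.sub_lt hn one_pos⟩ with hC
  have hψC : ∀ i : Fin n, ψ i ≤ C := by
    intro i
    apply hψ
    simp only [Fin.le_def]
    omega
  have hbdd : BddAbove (Set.range fun R : {R : Fin n → ℝ // ∀ i, l ≤ R i ∧ R i ≤ u} =>
      (∑ i, R.1 i * ψ i) / (∑ i, R.1 i)) := by
    refine ⟨C, ?_⟩
    rintro x ⟨R, rfl⟩
    rw [div_le_iff₀ (hRpos R)]
    calc ∑ i, R.1 i * ψ i ≤ ∑ i, R.1 i * C := by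
          refine Finset.sum_le_sum fun i _ => ?_
          exact mul_le_mul_of_nonneg_left (hψC i) (le_of_lt (lt_of_lt_of_le hl (R.2 i).1))
      _ = C * ∑ i, R.1 i := by rw [← Finset.sum_mul, mul_comm]
  apply le_antisymm
  · -- sup over box ≤ max over k
    set M : ℝ := (Finset.range (n + 1)).sup' (Finset.nonempty_range_iff.mpr (by omega))
        (fun k =>
          (l * ∑ i ∈ Finset.univ.filter (fun i : Fin n => (i : ℕ) < k), ψ i +
              u * ∑ i ∈ Finset.univ.filter (fun i : Fin n => k ≤ (i : ℕ)), ψ i) /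
            (l * k + u * ((n : ℝ) - k))) with hM
    apply ciSup_le
    intro R
    set S : Finset (Fin n) := Finset.univ.filter (fun i => ψ i ≤ M) with hSdef
    set k : ℕ := S.card with hk
    have hkn : k ≤ n := by
      calc k ≤ (Finset.univ : Finset (Fin n)).card := Finset.card_filter_le _ _
        _ = n := by simp
    have hiff : ∀ i : Fin n, (i:ℕ) < k ↔ ψ i ≤ M := by
      intro i
      constructor
      · intro h
        by_contra hc
        push_neg at hc
        have hsub : S ⊆ Finset.Iio i := by
          intro j hj
          have hjM : ψ j ≤ M := (Finset.mem_filter.mp hj).2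
          rw [Finset.mem_Iio]
          by_contra hji
          push_neg at hji
          exact absurd (le_trans (hψ hji) hjM) (not_le.mpr hc)
        have := Finset.card_le_card hsub
        rw [Fin.card_Iio] at this
        omega
      · intro h
        have hsub : Finset.Iic i ⊆ S := by
          intro j hj
          rw [Finset.mem_Iic] at hj
          exact Finset.mem_filter.mpr ⟨Finset.mem_univ j, le_trans (hψ hj) h⟩
        have := Finset.card_le_card hsub
        rw [Fin.card_Iic] at this
        omega
    have hS : S = Finset.univ.filter (fun i : Fin n => (i:ℕ) < k) := by
      ext i
      simp [hSdef, Finset.mem_filter, hiff i]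
    have hSc : Finset.univ.filter (fun i : Fin n => ¬ ψ i ≤ M) =
        Finset.univ.filter (fun i : Fin n => k ≤ (i:ℕ)) := by
      ext i
      simp only [Finset.mem_filter, Finset.mem_univ, true_and]
      rw [← hiff i, not_lt]
    have hlam : (l * ∑ i ∈ Finset.univ.filter (fun i : Fin n => (i : ℕ) < k), ψ i +
          u * ∑ i ∈ Finset.univ.filter (fun i : Fin n => k ≤ (i : ℕ)), ψ i) /
        (l * k + u * ((n : ℝ) - k)) ≤ M := by
      have := Finset.le_sup' (fun k : ℕ =>
          (l * ∑ i ∈ Finset.univ.filter (fun i : Fin n => (i : ℕ) < k), ψ i +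
              u * ∑ i ∈ Finset.univ.filter (fun i : Fin n => k ≤ (i : ℕ)), ψ i) /
            (l * k + u * ((n : ℝ) - k)))
          (Finset.mem_range.mpr (Nat.lt_succ_of_le hkn))
      rw [← hM] at this
      exact this
    rw [div_le_iff₀ (hden k hkn)] at hlam
    rw [div_le_iff₀ (hRpos R)]
    -- per-coordinate bound
    have h1 : ∑ i, R.1 i * (ψ i - M) ≤
        ∑ i, (if ψ i ≤ M then l else u) * (ψ i - M) := by
      refine Finset.sum_le_sum fun i _ => ?_
      by_cases hi : ψ i ≤ M
      · rw [if_pos hi]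
        exact mul_le_mul_of_nonpos_right (R.2 i).1 (sub_nonpos.mpr hi)
      · rw [if_neg hi]
        push_neg at hi
        exact mul_le_mul_of_nonneg_right (R.2 i).2 (sub_nonneg.mpr hi.le)
    have h2 : ∑ i, R.1 i * (ψ i - M) = (∑ i, R.1 i * ψ i) - M * ∑ i, R.1 i := by
      rw [Finset.mul_sum, ← Finset.sum_sub_distrib]
      exact Finset.sum_congr rfl fun i _ => by ring
    have h3 : ∑ i, (if ψ i ≤ M then l else u) * (ψ i - M) =
        (l * ∑ i ∈ Finset.univ.filter (fun i : Fin n => (i : ℕ) < k), ψ i +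
          u * ∑ i ∈ Finset.univ.filter (fun i : Fin n => k ≤ (i : ℕ)), ψ i) -
        M * (l * k + u * ((n : ℝ) - k)) := by
      rw [← Finset.sum_filter_add_sum_filter_not Finset.univ (fun i : Fin n => ψ i ≤ M)]
      have e1 : ∑ i ∈ Finset.univ.filter (fun i : Fin n => ψ i ≤ M),
          (if ψ i ≤ M then l else u) * (ψ i - M) =
          ∑ i ∈ Finset.univ.filter (fun i : Fin n => (i:ℕ) < k), l * (ψ i - M) := by
        rw [← hS]
        exact Finset.sum_congr rfl fun i hi => by
          rw [if_pos (Finset.mem_filter.mp hi).2]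
      have e2 : ∑ i ∈ Finset.univ.filter (fun i : Fin n => ¬ ψ i ≤ M),
          (if ψ i ≤ M then l else u) * (ψ i - M) =
          ∑ i ∈ Finset.univ.filter (fun i : Fin n => k ≤ (i:ℕ)), u * (ψ i - M) := by
        rw [← hSc]
        exact Finset.sum_congr rfl fun i hi => by
          rw [if_neg (Finset.mem_filter.mp hi).2]
      rw [e1, e2]
      have d1 : ∑ i ∈ Finset.univ.filter (fun i : Fin n => (i:ℕ) < k), l * (ψ i - M)
          = l * (∑ i ∈ Finset.univ.filter (fun i : Fin n => (i:ℕ) < k), ψ i) - l * M * k := by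
        rw [← Finset.mul_sum, Finset.sum_sub_distrib, Finset.sum_const,
          card_flt n k hkn, nsmul_eq_mul]
        ring
      have d2 : ∑ i ∈ Finset.univ.filter (fun i : Fin n => k ≤ (i:ℕ)), u * (ψ i - M)
          = u * (∑ i ∈ Finset.univ.filter (fun i : Fin n => k ≤ (i:ℕ)), ψ i)
            - u * M * ((n : ℝ) - k) := by
        rw [← Finset.mul_sum, Finset.sum_sub_distrib, Finset.sum_const,
          card_fge n k hkn, nsmul_eq_mul, Nat.cast_sub hkn]
        ring
      rw [d1, d2]
      ring
    linarith
  · -- max over k ≤ sup over box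
    apply Finset.sup'_le
    intro k hkmem
    have hkn : k ≤ n := by
      rw [Finset.mem_range] at hkmem; omega
    set Rk : Fin n → ℝ := fun i => if (i:ℕ) < k then l else u with hRk
    have hbox : ∀ i, l ≤ Rk i ∧ Rk i ≤ u := by
      intro i
      by_cases hi : (i:ℕ) < k
      · simp [hRk, hi, hlu]
      · simp [hRk, hi, hlu]
    have hnum : ∑ i, Rk i * ψ i =
        l * ∑ i ∈ Finset.univ.filter (fun i : Fin n => (i : ℕ) < k), ψ i +
          u * ∑ i ∈ Finset.univ.filter (fun i : Fin n => k ≤ (i : ℕ)), ψ i := by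
      rw [← Finset.sum_filter_add_sum_filter_not Finset.univ (fun i : Fin n => (i:ℕ) < k)]
      have e1 : ∑ i ∈ Finset.univ.filter (fun i : Fin n => (i:ℕ) < k), Rk i * ψ i =
          ∑ i ∈ Finset.univ.filter (fun i : Fin n => (i:ℕ) < k), l * ψ i :=
        Finset.sum_congr rfl fun i hi => by
          rw [hRk]; simp only [if_pos (Finset.mem_filter.mp hi).2]
      have e2 : ∑ i ∈ Finset.univ.filter (fun i : Fin n => ¬ (i:ℕ) < k), Rk i * ψ i =
          ∑ i ∈ Finset.univ.filter (fun i : Fin n => k ≤ (i:ℕ)), u * ψ i := by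
        have : Finset.univ.filter (fun i : Fin n => ¬ (i:ℕ) < k) =
            Finset.univ.filter (fun i : Fin n => k ≤ (i:ℕ)) := by
          simp only [not_lt]
        rw [this]
        exact Finset.sum_congr rfl fun i hi => by
          rw [hRk]; simp only [if_neg (not_lt.mpr (Finset.mem_filter.mp hi).2)]
      rw [e1, e2, ← Finset.mul_sum, ← Finset.mul_sum]
    have hdenom : ∑ i, Rk i = l * k + u * ((n : ℝ) - k) := by
      rw [← Finset.sum_filter_add_sum_filter_not Finset.univ (fun i : Fin n => (i:ℕ) < k)]
      have e1 : ∑ i ∈ Finset.univ.filter (fun i : Fin n => (i:ℕ) < k), Rk i =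
          ∑ _i ∈ Finset.univ.filter (fun i : Fin n => (i:ℕ) < k), l :=
        Finset.sum_congr rfl fun i hi => by
          rw [hRk]; simp only [if_pos (Finset.mem_filter.mp hi).2]
      have e2 : ∑ i ∈ Finset.univ.filter (fun i : Fin n => ¬ (i:ℕ) < k), Rk i =
          ∑ _i ∈ Finset.univ.filter (fun i : Fin n => k ≤ (i:ℕ)), u := by
        have : Finset.univ.filter (fun i : Fin n => ¬ (i:ℕ) < k) =
            Finset.univ.filter (fun i : Fin n => k ≤ (i:ℕ)) := by
          simp only [not_lt]
        rw [this]
        exact Finset.sum_congr rfl fun i hi => by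
          rw [hRk]; simp only [if_neg (not_lt.mpr (Finset.mem_filter.mp hi).2)]
      rw [e1, e2, Finset.sum_const, Finset.sum_const, card_flt n k hkn, card_fge n k hkn,
        nsmul_eq_mul, nsmul_eq_mul, Nat.cast_sub hkn]
      ring
    have : (l * ∑ i ∈ Finset.univ.filter (fun i : Fin n => (i : ℕ) < k), ψ i +
          u * ∑ i ∈ Finset.univ.filter (fun i : Fin n => k ≤ (i : ℕ)), ψ i) /
        (l * k + u * ((n : ℝ) - k)) =
        (∑ i, (⟨Rk, hbox⟩ : {R : Fin n → ℝ // ∀ i, l ≤ R i ∧ R i ≤ u}).1 i * ψ i) /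
        (∑ i, (⟨Rk, hbox⟩ : {R : Fin n → ℝ // ∀ i, l ≤ R i ∧ R i ≤ u}).1 i) := by
      rw [hnum, hdenom]
    rw [this]
    exact le_ciSup hbdd _
end

section
/- The function g_log(z) defined as z/4 + 1/2 for z ≥ 0 and (1/2)tanh(z/2) + 1/2 for z < 0 is convex on ℝ. -/
open Real

private lemma hasDerivAt_tanh' (x : ℝ) :
    HasDerivAt Real.tanh (1 / Real.cosh x ^ 2) x := by
  have h : HasDerivAt (fun y => Real.sinh y / Real.cosh y)
      ((Real.cosh x * Real.cosh x - Real.sinh x * Real.sinh x) / Real.cosh x ^ 2) x :=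
    (Real.hasDerivAt_sinh x).div (Real.hasDerivAt_cosh x) (ne_of_gt (Real.cosh_pos x))
  have : (Real.cosh x * Real.cosh x - Real.sinh x * Real.sinh x) = 1 := by
    have := Real.cosh_sq_sub_sinh_sq x; nlinarith [this]
  rw [this] at h
  exact h.congr_of_eventuallyEq (Filter.Eventually.of_forall fun y =>
    (Real.tanh_eq_sinh_div_cosh y))

private lemma hasDerivAt_h (x : ℝ) :
    HasDerivAt (fun z : ℝ => (1 / 2) * Real.tanh (z / 2) + 1 / 2)
      (1 / (4 * Real.cosh (x / 2) ^ 2)) x := by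
  have h1 : HasDerivAt (fun z : ℝ => z / 2) (1 / 2) x := by
    simpa using (hasDerivAt_id x).div_const 2
  have h2 := (hasDerivAt_tanh' (x / 2)).comp x h1
  have h3 := (h2.const_mul (1 / 2 : ℝ)).add_const (1 / 2)
  have e : 1 / (4 * Real.cosh (x / 2) ^ 2) = 1 / 2 * (1 / Real.cosh (x / 2) ^ 2 * (1 / 2)) := by
    ring
  rw [e]; exact h3

/-- The function g_log, equal to z/4 + 1/2 for z ≥ 0 and (1/2)tanh(z/2) + 1/2
for z < 0, is convex on ℝ. -/
theorem stmt_7 :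
    ConvexOn ℝ Set.univ
      (fun z : ℝ =>
        if 0 ≤ z then z / 4 + 1 / 2 else (1 / 2) * Real.tanh (z / 2) + 1 / 2) := by
  set f : ℝ → ℝ := fun z =>
    if 0 ≤ z then z / 4 + 1 / 2 else (1 / 2) * Real.tanh (z / 2) + 1 / 2 with hf
  set h : ℝ → ℝ := fun z => (1 / 2) * Real.tanh (z / 2) + 1 / 2 with hh
  set l : ℝ → ℝ := fun z => z / 4 + 1 / 2 with hl
  have hfh : ∀ z ≤ 0, f z = h z := by
    intro z hz
    rcases eq_or_lt_of_le hz with rfl | hz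
    · simp [hf, hh]
    · simp only [hf, hh, if_neg (not_le.mpr hz)]
  have hfl : ∀ z, 0 ≤ z → f z = l z := by
    intro z hz; simp [hf, hl, hz]
  -- derivative facts
  have hneg : ∀ x < 0, HasDerivAt f (1 / (4 * Real.cosh (x / 2) ^ 2)) x := by
    intro x hx
    refine (hasDerivAt_h x).congr_of_eventuallyEq ?_
    filter_upwards [eventually_lt_nhds hx] with y hy
    exact hfh y hy.le
  have hpos : ∀ x > 0, HasDerivAt f (1 / 4) x := by
    intro x hx
    have hld : HasDerivAt l (1 / 4) x := by
      rw [hl]; norm_num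
      simpa using ((hasDerivAt_id x).div_const 4).add_const (1 / 2 : ℝ)
    refine hld.congr_of_eventuallyEq ?_
    filter_upwards [eventually_gt_nhds hx] with y hy
    exact hfl y hy.le
  have hzero : HasDerivAt f (1 / 4) 0 := by
    have hL : HasDerivWithinAt f (1 / 4) (Set.Iic 0) 0 := by
      have : HasDerivAt h (1 / 4) 0 := by
        rw [hh]
        have := hasDerivAt_h 0
        norm_num [Real.cosh_zero] at this ⊢
        exact this
      exact (this.hasDerivWithinAt).congr (fun y hy => hfh y hy) (hfh 0 le_rfl)
    have hR : HasDerivWithinAt f (1 / 4) (Set.Ici 0) 0 := by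
      have hld : HasDerivAt l (1 / 4) 0 := by
        rw [hl]; norm_num
        simpa using ((hasDerivAt_id (0 : ℝ)).div_const 4).add_const (1 / 2 : ℝ)
      exact (hld.hasDerivWithinAt).congr (fun y hy => hfl y hy) (hfl 0 le_rfl)
    have := hL.union hR
    rw [Set.Iic_union_Ici] at this
    simpa [hasDerivWithinAt_univ] using this
  have hderiv : ∀ x, deriv f x =
      if x < 0 then 1 / (4 * Real.cosh (x / 2) ^ 2) else 1 / 4 := by
    intro x
    rcases lt_trichotomy x 0 with hx | rfl | hx
    · rw [if_pos hx]; exact (hneg x hx).deriv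
    · rw [if_neg (lt_irrefl 0)]; exact hzero.deriv
    · rw [if_neg (not_lt.mpr hx.le)]; exact (hpos x hx).deriv
  -- apply convexity criterion
  refine MonotoneOn.convexOn_of_deriv convex_univ ?_ ?_ ?_
  · -- continuity
    intro x _
    rcases lt_trichotomy x 0 with hx | rfl | hx
    · exact ((hneg x hx).continuousAt).continuousWithinAt
    · exact hzero.continuousAt.continuousWithinAt
    · exact ((hpos x hx).continuousAt).continuousWithinAt
  · intro x _
    rcases lt_trichotomy x 0 with hx | rfl | hx
    · exact ((hneg x hx).differentiableAt).differentiableWithinAt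
    · exact hzero.differentiableAt.differentiableWithinAt
    · exact ((hpos x hx).differentiableAt).differentiableWithinAt
  · rw [interior_univ]
    intro a _ b _ hab
    rw [hderiv a, hderiv b]
    have hc : ∀ x : ℝ, (0:ℝ) < 4 * Real.cosh (x / 2) ^ 2 := fun x => by
      positivity
    split_ifs with ha hb hb
    · -- both negative
      have hcosh : Real.cosh (b / 2) ≤ Real.cosh (a / 2) := by
        rw [Real.cosh_le_cosh]
        rw [abs_of_nonpos (by linarith), abs_of_nonpos (by linarith)]
        linarith
      have h1 : (0:ℝ) < Real.cosh (b / 2) := Real.cosh_pos _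
      apply one_div_le_one_div_of_le (hc b)
      nlinarith
    · -- a < 0 ≤ b
      have h1 : (1:ℝ) ≤ Real.cosh (a / 2) := Real.one_le_cosh _
      have : (4:ℝ) ≤ 4 * Real.cosh (a / 2) ^ 2 := by nlinarith
      exact one_div_le_one_div_of_le (by norm_num) this
    · linarith
    · exact le_refl _
end

section
/- The function h_log(z) defined as z/4 − (1/2)tanh(z/2) for z ≥ 0 and 0 for z < 0 is convex on ℝ. -/
open Real

private lemma tanh_hasDerivAt (x : ℝ) :
    HasDerivAt Real.tanh (1 - Real.tanh x ^ 2) x := by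
  have h := (Real.hasDerivAt_sinh x).div (Real.hasDerivAt_cosh x) (Real.cosh_pos x).ne'
  have heq : (Real.sinh / Real.cosh) = Real.tanh := by
    funext y; rw [Pi.div_apply, Real.tanh_eq_sinh_div_cosh]
  rw [heq] at h
  refine h.congr_deriv ?_
  have hc := (Real.cosh_pos x).ne'
  rw [Real.tanh_eq_sinh_div_cosh]
  field_simp

private lemma tanh_mono : Monotone Real.tanh := by
  intro x y hxy
  rw [Real.tanh_eq_sinh_div_cosh, Real.tanh_eq_sinh_div_cosh,
    div_le_div_iff₀ (Real.cosh_pos x) (Real.cosh_pos y)]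
  have h : Real.sinh (x - y) ≤ 0 := Real.sinh_nonpos_iff.2 (by linarith)
  rw [Real.sinh_sub] at h
  linarith

private lemma tanh_nonneg {x : ℝ} (hx : 0 ≤ x) : 0 ≤ Real.tanh x := by
  rw [Real.tanh_eq_sinh_div_cosh]
  exact div_nonneg (Real.sinh_nonneg_iff.2 hx) (Real.cosh_pos x).le

private lemma F_hasDerivAt (z : ℝ) :
    HasDerivAt (fun z : ℝ => z / 4 - (1 / 2) * Real.tanh (z / 2))
      (Real.tanh (z / 2) ^ 2 / 4) z := by
  have h1 : HasDerivAt (fun z : ℝ => z / 2) (1 / 2) z := by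
    simpa using (hasDerivAt_id z).div_const 2
  have h2 := (tanh_hasDerivAt (z / 2)).comp z h1
  have h3 : HasDerivAt (fun z : ℝ => z / 4) (1 / 4) z := by
    simpa using (hasDerivAt_id z).div_const 4
  have h4 := h3.sub (h2.const_mul (1 / 2))
  refine h4.congr_deriv ?_
  ring

private lemma F_convexOn :
    ConvexOn ℝ (Set.Ici (0 : ℝ))
      (fun z : ℝ => z / 4 - (1 / 2) * Real.tanh (z / 2)) := by
  have hderiv : deriv (fun z : ℝ => z / 4 - (1 / 2) * Real.tanh (z / 2)) =
      fun z => Real.tanh (z / 2) ^ 2 / 4 := funext fun z => (F_hasDerivAt z).deriv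
  apply MonotoneOn.convexOn_of_deriv (convex_Ici 0)
  · exact fun x _ => (F_hasDerivAt x).continuousAt.continuousWithinAt
  · exact fun x _ => (F_hasDerivAt x).differentiableAt.differentiableWithinAt
  · rw [hderiv]
    intro x hx y hy hxy
    rw [interior_Ici] at hx hy
    have hx0 : 0 < x := hx
    have hy0 : 0 < y := hy
    have h1 : Real.tanh (x / 2) ≤ Real.tanh (y / 2) := tanh_mono (by linarith)
    have h2 : 0 ≤ Real.tanh (x / 2) := tanh_nonneg (by linarith)
    nlinarith

private lemma F_monotoneOn :
    MonotoneOn (fun z : ℝ => z / 4 - (1 / 2) * Real.tanh (z / 2)) (Set.Ici (0 : ℝ)) := by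
  have := monotone_of_deriv_nonneg (fun x => (F_hasDerivAt x).differentiableAt)
    (fun x => by rw [(F_hasDerivAt x).deriv]; positivity)
  exact this.monotoneOn _

/-- The function h_log, equal to z/4 − (1/2)tanh(z/2) for z ≥ 0 and 0 for z < 0,
is convex on ℝ. -/
theorem stmt_8 :
    ConvexOn ℝ Set.univ
      (fun z : ℝ =>
        if 0 ≤ z then z / 4 - (1 / 2) * Real.tanh (z / 2) else 0) := by
  have hrange : (fun z : ℝ => max z 0) '' Set.univ = Set.Ici (0 : ℝ) := by
    rw [Set.image_univ]
    ext x
    constructor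
    · rintro ⟨z, rfl⟩; exact le_max_right z 0
    · intro hx; exact ⟨x, max_eq_left hx⟩
  have hmax : ConvexOn ℝ Set.univ (fun z : ℝ => max z 0) := by
    exact (convexOn_id convex_univ).sup (convexOn_const 0 convex_univ)
  have hcomp := ConvexOn.comp (g := fun z : ℝ => z / 4 - (1 / 2) * Real.tanh (z / 2))
    (by rw [hrange]; exact F_convexOn) hmax (by rw [hrange]; exact F_monotoneOn)
  convert hcomp using 1
  funext z
  by_cases hz : 0 ≤ z
  · simp only [Function.comp_apply, if_pos hz, max_eq_left hz]
  · simp only [Function.comp_apply, if_neg hz, max_eq_right (le_of_not_ge hz)]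
    norm_num [Real.tanh_zero]
end

section
/- The logistic sigmoid admits the DC decomposition σ(z) = g_log(z) − h_log(z), where g_log(z) = z/4 + 1/2 for z ≥ 0 and (1/2)tanh(z/2) + 1/2 otherwise, and h_log(z) = z/4 − (1/2)tanh(z/2) for z ≥ 0 and 0 otherwise, with both g_log and h_log convex. -/
open Real Set

noncomputable def sig (z : ℝ) : ℝ := 1 / (1 + Real.exp (-z))
noncomputable def sig' (z : ℝ) : ℝ := Real.exp (-z) / (1 + Real.exp (-z))^2

lemma sig_eq_tanh (z : ℝ) : (1/2) * Real.tanh (z/2) + 1/2 = sig z := by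
  have h1 : (0:ℝ) < Real.exp (z/2) := Real.exp_pos _
  have h2 : (0:ℝ) < Real.exp (-(z/2)) := Real.exp_pos _
  have hz : Real.exp (-z) = Real.exp (-(z/2)) * Real.exp (-(z/2)) := by
    rw [← Real.exp_add]; ring_nf
  have hmul : Real.exp (z/2) * Real.exp (-(z/2)) = 1 := by
    rw [← Real.exp_add]; simp
  rw [sig, Real.tanh_eq_sinh_div_cosh, Real.sinh_eq, Real.cosh_eq, hz]
  have hden : (0:ℝ) < Real.exp (z/2) + Real.exp (-(z/2)) := by positivity
  have hden2 : (0:ℝ) < 1 + Real.exp (-(z/2)) * Real.exp (-(z/2)) := by positivity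
  field_simp
  linear_combination (2 * Real.exp (-(z/2))) * hmul

lemma sig_hasDerivAt (z : ℝ) : HasDerivAt sig (sig' z) z := by
  have h1 : HasDerivAt (fun w : ℝ => 1 + Real.exp (-w)) (-Real.exp (-z)) z := by
    have := (Real.hasDerivAt_exp (-z)).comp z (hasDerivAt_neg z)
    simpa using (this.const_add 1)
  have hne : 1 + Real.exp (-z) ≠ 0 := by positivity
  have h2 := h1.inv hne
  have : sig = fun w : ℝ => (1 + Real.exp (-w))⁻¹ := by
    funext w; rw [sig, one_div]
  rw [this, sig']
  rw [neg_neg] at h2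
  exact h2

lemma sig'_le (z : ℝ) : sig' z ≤ 1/4 := by
  have h : (0:ℝ) < Real.exp (-z) := Real.exp_pos _
  rw [sig', div_le_iff₀ (by positivity)]
  nlinarith [sq_nonneg (1 - Real.exp (-z))]

lemma sig'_zero : sig' 0 = 1/4 := by simp [sig']; norm_num

lemma sig_zero : sig 0 = 1/2 := by simp [sig]; norm_num

noncomputable def gfun (z : ℝ) : ℝ := if 0 ≤ z then z/4 + 1/2 else sig z
noncomputable def Dg (z : ℝ) : ℝ := if 0 ≤ z then 1/4 else sig' z
noncomputable def hfun (z : ℝ) : ℝ := if 0 ≤ z then z/4 + 1/2 - sig z else 0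
noncomputable def Dh (z : ℝ) : ℝ := if 0 ≤ z then 1/4 - sig' z else 0

lemma lin_hasDerivAt (z : ℝ) : HasDerivAt (fun w : ℝ => w/4 + 1/2) (1/4) z := by
  simpa using ((hasDerivAt_id z).div_const 4).add_const (1/2)

lemma gfun_hasDerivAt (z : ℝ) : HasDerivAt gfun (Dg z) z := by
  rcases lt_trichotomy z 0 with hz | hz | hz
  · have h := sig_hasDerivAt z
    rw [Dg, if_neg (not_le.mpr hz)]
    refine h.congr_of_eventuallyEq ?_
    filter_upwards [Iio_mem_nhds hz] with w hw
    rw [gfun, if_neg (not_le.mpr hw)]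
  · subst hz
    rw [Dg, if_pos le_rfl]
    rw [← hasDerivWithinAt_univ, ← Set.Iic_union_Ici (a := (0:ℝ))]
    refine HasDerivWithinAt.union ?_ ?_
    · have h := (sig_hasDerivAt 0).hasDerivWithinAt (s := Set.Iic 0)
      rw [sig'_zero] at h
      refine h.congr (fun w hw => ?_) ?_
      · rw [gfun]; split_ifs with h0
        · have : w = 0 := le_antisymm hw h0
          rw [this, sig_zero]; norm_num
        · rfl
      · rw [gfun, if_pos le_rfl, sig_zero]; norm_num
    · have h := (lin_hasDerivAt 0).hasDerivWithinAt (s := Set.Ici 0)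
      refine h.congr (fun w hw => ?_) ?_
      · rw [gfun, if_pos (show (0:ℝ) ≤ w from hw)]
      · rw [gfun, if_pos le_rfl]
  · have h := lin_hasDerivAt z
    rw [Dg, if_pos hz.le]
    refine h.congr_of_eventuallyEq ?_
    filter_upwards [Ioi_mem_nhds hz] with w hw
    rw [gfun, if_pos hw.le]

lemma hfun_hasDerivAt (z : ℝ) : HasDerivAt hfun (Dh z) z := by
  rcases lt_trichotomy z 0 with hz | hz | hz
  · rw [Dh, if_neg (not_le.mpr hz)]
    refine (hasDerivAt_const z (0:ℝ)).congr_of_eventuallyEq ?_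
    filter_upwards [Iio_mem_nhds hz] with w hw
    rw [hfun, if_neg (not_le.mpr hw)]
  · subst hz
    rw [Dh, if_pos le_rfl, sig'_zero]
    norm_num
    rw [← hasDerivWithinAt_univ, ← Set.Iic_union_Ici (a := (0:ℝ))]
    refine HasDerivWithinAt.union ?_ ?_
    · have h := (hasDerivAt_const (0:ℝ) (0:ℝ)).hasDerivWithinAt (s := Set.Iic 0)
      refine h.congr (fun w hw => ?_) ?_
      · rw [hfun]; split_ifs with h0
        · have : w = 0 := le_antisymm hw h0
          rw [this, sig_zero]; norm_num
        · rfl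
      · rw [hfun, if_pos le_rfl, sig_zero]; norm_num
    · have h := ((lin_hasDerivAt 0).sub (sig_hasDerivAt 0)).hasDerivWithinAt (s := Set.Ici 0)
      rw [sig'_zero] at h
      norm_num at h
      refine h.congr (fun w hw => ?_) ?_
      · rw [hfun, if_pos (show (0:ℝ) ≤ w from hw)]; rfl
      · rw [hfun, if_pos le_rfl]; rfl
  · rw [Dh, if_pos hz.le]
    refine ((lin_hasDerivAt z).sub (sig_hasDerivAt z)).congr_of_eventuallyEq ?_
    filter_upwards [Ioi_mem_nhds hz] with w hw
    rw [hfun, if_pos hw.le]; rfl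

lemma Dg_mono : Monotone Dg := by
  intro x y hxy
  rw [Dg, Dg]
  split_ifs with hx hy hy
  · exact le_rfl
  · exact absurd (hx.trans hxy) hy
  · exact sig'_le x
  · -- x ≤ y < 0
    push_neg at hx hy
    set a := Real.exp (-x) with ha
    set b := Real.exp (-y) with hb
    have hab : b ≤ a := Real.exp_le_exp.mpr (by linarith)
    have hb1 : 1 < b := Real.one_lt_exp_iff.mpr (by linarith)
    have hbpos : (0:ℝ) < b := Real.exp_pos _
    have hapos : (0:ℝ) < a := Real.exp_pos _
    rw [sig', sig', div_le_div_iff₀ (by positivity) (by positivity)]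
    have key : 0 ≤ (a - b) * (a * b - 1) :=
      mul_nonneg (by linarith) (by nlinarith)
    nlinarith [key]

lemma Dh_mono : Monotone Dh := by
  intro x y hxy
  rw [Dh, Dh]
  split_ifs with hx hy hy
  · -- 0 ≤ x ≤ y : sig' y ≤ sig' x
    set a := Real.exp (-x) with ha
    set b := Real.exp (-y) with hb
    have hab : b ≤ a := Real.exp_le_exp.mpr (by linarith)
    have ha1 : a ≤ 1 := Real.exp_le_one_iff.mpr (by linarith)
    have hbpos : (0:ℝ) < b := Real.exp_pos _
    have hapos : (0:ℝ) < a := Real.exp_pos _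
    have : sig' y ≤ sig' x := by
      rw [sig', sig', div_le_div_iff₀ (by positivity) (by positivity)]
      have key : 0 ≤ (a - b) * (1 - a * b) :=
        mul_nonneg (by linarith) (by nlinarith)
      nlinarith [key]
    linarith
  · exact absurd (hx.trans hxy) hy
  · have := sig'_le y; linarith
  · exact le_rfl

lemma gfun_convex : ConvexOn ℝ Set.univ gfun := by
  have hdiff : Differentiable ℝ gfun := fun z => (gfun_hasDerivAt z).differentiableAt
  have hderiv : deriv gfun = Dg := funext fun z => (gfun_hasDerivAt z).deriv
  exact Monotone.convexOn_univ_of_deriv hdiff (hderiv ▸ Dg_mono)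

lemma hfun_convex : ConvexOn ℝ Set.univ hfun := by
  have hdiff : Differentiable ℝ hfun := fun z => (hfun_hasDerivAt z).differentiableAt
  have hderiv : deriv hfun = Dh := funext fun z => (hfun_hasDerivAt z).deriv
  exact Monotone.convexOn_univ_of_deriv hdiff (hderiv ▸ Dh_mono)

/-- DC decomposition of the logistic sigmoid: σ = g_log − h_log with both parts
convex. -/
theorem stmt_9 :
    (∀ z : ℝ, 1 / (1 + Real.exp (-z)) =
        (if 0 ≤ z then z / 4 + 1 / 2 else (1 / 2) * Real.tanh (z / 2) + 1 / 2) -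
          (if 0 ≤ z then z / 4 - (1 / 2) * Real.tanh (z / 2) else 0)) ∧
    ConvexOn ℝ Set.univ
      (fun z : ℝ =>
        if 0 ≤ z then z / 4 + 1 / 2 else (1 / 2) * Real.tanh (z / 2) + 1 / 2) ∧
    ConvexOn ℝ Set.univ
      (fun z : ℝ =>
        if 0 ≤ z then z / 4 - (1 / 2) * Real.tanh (z / 2) else 0) := by
  refine ⟨?_, ?_, ?_⟩
  · intro z
    have h := sig_eq_tanh z
    rw [sig] at h
    split_ifs <;> linarith
  · have : (fun z : ℝ =>
        if 0 ≤ z then z / 4 + 1 / 2 else (1 / 2) * Real.tanh (z / 2) + 1 / 2) = gfun := by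
      funext z
      rw [gfun]
      split_ifs with hz
      · rfl
      · exact sig_eq_tanh z
    rw [this]; exact gfun_convex
  · have : (fun z : ℝ =>
        if 0 ≤ z then z / 4 - (1 / 2) * Real.tanh (z / 2) else 0) = hfun := by
      funext z
      rw [hfun]
      split_ifs with hz
      · have := sig_eq_tanh z; linarith
      · rfl
    rw [this]; exact hfun_convex
end

section
/- Let ψ be sorted nondecreasing and 0 < l < u. If the current objective value V = (Σ R_i ψ_i)/(Σ R_i) satisfies V ≥ ψ_j, then decreasing R_j to l does not decrease the objective. -/
open Finset

/-- If the current objective value is at least ψ_j, lowering R_j to l does not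
decrease the normalized weighted average. -/
theorem stmt_14 (n : ℕ) (hn : 0 < n) (l u : ℝ) (hl : 0 < l) (hlu : l < u)
    (ψ : Fin n → ℝ)
    (R : Fin n → ℝ) (hR : ∀ i, l ≤ R i ∧ R i ≤ u)
    (j : Fin n) (hj : l < R j)
    (hV : ψ j ≤ (∑ i, R i * ψ i) / (∑ i, R i)) :
    (∑ i, R i * ψ i) / (∑ i, R i) ≤
      (∑ i, Function.update R j l i * ψ i) / (∑ i, Function.update R j l i) := by
  have hSpos : 0 < ∑ i, R i :=
    Finset.sum_pos (fun i _ => lt_of_lt_of_le hl (hR i).1) ⟨j, Finset.mem_univ j⟩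
  have hS'pos : 0 < ∑ i, Function.update R j l i := by
    refine Finset.sum_pos (fun i _ => ?_) ⟨j, Finset.mem_univ j⟩
    rcases eq_or_ne i j with h | h
    · subst h; simp [hl]
    · simpa [Function.update_of_ne h] using lt_of_lt_of_le hl (hR i).1
  have h1 : (∑ i, Function.update R j l i) = (∑ i, R i) - (R j - l) := by
    rw [Finset.sum_update_of_mem (Finset.mem_univ j),
      Finset.sum_eq_sum_sdiff_singleton_add (Finset.mem_univ j) R]
    ring
  have hfun : (fun i => Function.update R j l i * ψ i)
      = Function.update (fun i => R i * ψ i) j (l * ψ j) := by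
    ext i
    rcases eq_or_ne i j with h | h
    · subst h; simp
    · simp [Function.update_of_ne h]
  have h2 : (∑ i, Function.update R j l i * ψ i)
      = (∑ i, R i * ψ i) - (R j - l) * ψ j := by
    calc (∑ i, Function.update R j l i * ψ i)
        = ∑ i, Function.update (fun i => R i * ψ i) j (l * ψ j) i := by rw [hfun]
      _ = (∑ i, R i * ψ i) - (R j - l) * ψ j := by
          rw [Finset.sum_update_of_mem (Finset.mem_univ j),
            Finset.sum_eq_sum_sdiff_singleton_add (Finset.mem_univ j) (fun i => R i * ψ i)]
          ring
  have hV' : ψ j * (∑ i, R i) ≤ ∑ i, R i * ψ i := by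
    rwa [le_div_iff₀ hSpos] at hV
  rw [div_le_div_iff₀ hSpos hS'pos, h1, h2]
  nlinarith [mul_le_mul_of_nonneg_left hV' (le_of_lt (sub_pos.mpr hj))]
end
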